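/- Let n ≥ 1 be a natural number, let OPT, ε, R*, C₁, C₂, z₁, z₂, a, b, k₁, k₂, k' be nonnegative reals with 1 ≤ k₁ ≤ n, a + b = 1, a·k₁ + b·k₂ = k', 0 ≤ z₂ − z₁ ≤ ε·OPT/(3n·2ⁿ), C₁ + 3(k₁ − 1)·z₁ ≤ 3(OPT + k'·z₁) + 4R*, and C₂ + 3(k₂ − 1)·z₂ ≤ 3(OPT + k'·z₂) + 4R*. Then a·C₁ + b·C₂ ≤ (3 + ε)·OPT + 4R* + 3z₁. -/

import Mathlib

/-!
Averaging the two primal-dual bounds with weights `a, b` leaves, besides `3 OPT + 4R* + 3z₁`,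
only the error `3 (a b (k₁ - k₂) + b) (z₂ - z₁)` caused by the two solutions having different
multipliers `z₁ ≤ z₂`. The coefficient is at most `k₁ / 4 + 1 ≤ n 2ⁿ` because `a b ≤ 1/4`, so the
binary-search tolerance `z₂ - z₁ ≤ ε OPT / (3 n 2ⁿ)` makes the error at most `ε OPT`.
-/

lemma convex_combination_le_add_gap {c B C₁ C₂ z₁ z₂ a b k₁ k₂ : ℝ}
    (ha : 0 ≤ a) (hb : 0 ≤ b) (hab : a + b = 1)
    (h₁ : C₁ + c * (k₁ - 1) * z₁ ≤ B + c * (a * k₁ + b * k₂) * z₁)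
    (h₂ : C₂ + c * (k₂ - 1) * z₂ ≤ B + c * (a * k₁ + b * k₂) * z₂) :
    a * C₁ + b * C₂ ≤ B + c * z₁ + c * (a * b * (k₁ - k₂) + b) * (z₂ - z₁) := by
  obtain rfl : b = 1 - a := by linarith
  linear_combination a * h₁ + (1 - a) * h₂

lemma gap_coeff_le {a b k₁ k₂ : ℝ} (ha : 0 ≤ a) (hb : 0 ≤ b) (hab : a + b = 1)
    (hk₁ : 0 ≤ k₁) (hk₂ : 0 ≤ k₂) :
    a * b * (k₁ - k₂) + b ≤ k₁ / 4 + 1 := by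
  have hab4 : a * b ≤ 1 / 4 := by nlinarith [sq_nonneg (a - b)]
  have : a * b * (k₁ - k₂) ≤ k₁ / 4 := calc
    a * b * (k₁ - k₂) ≤ a * b * k₁ := by gcongr; linarith
    _ ≤ 1 / 4 * k₁ := by gcongr
    _ = k₁ / 4 := by ring
  linarith

lemma div_four_add_one_le_mul_two_pow {n : ℕ} (hn : 1 ≤ n) :
    (n : ℝ) / 4 + 1 ≤ n * 2 ^ n := by
  have hn' : (1 : ℝ) ≤ n := by exact_mod_cast hn
  have h2n : (2 : ℝ) ≤ 2 ^ n := by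
    simpa using pow_le_pow_right₀ (by norm_num : (1 : ℝ) ≤ 2) hn
  nlinarith

lemma three_mul_mul_le_of_le_div {c M δ x : ℝ} (hc : c ≤ M) (hM : 0 < M) (hδ₀ : 0 ≤ δ)
    (hδ : δ ≤ x / (3 * M)) :
    3 * c * δ ≤ x := calc
  3 * c * δ ≤ δ * (3 * M) := by nlinarith
  _ ≤ x := (le_div_iff₀ (by positivity)).mp hδ

theorem stmt_4 (n : ℕ)
    (OPT ε Rstar C₁ C₂ z₁ z₂ a b k₁ k₂ k' : ℝ)
    (ha : 0 ≤ a) (hb : 0 ≤ b)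
    (hk₂ : 0 ≤ k₂)
    (hk₁1 : 1 ≤ k₁) (hk₁n : k₁ ≤ (n : ℝ)) (hab : a + b = 1)
    (habk : a * k₁ + b * k₂ = k')
    (hz : 0 ≤ z₂ - z₁) (hδ : z₂ - z₁ ≤ ε * OPT / (3 * n * 2 ^ n))
    (h1 : C₁ + 3 * (k₁ - 1) * z₁ ≤ 3 * (OPT + k' * z₁) + 4 * Rstar)
    (h2 : C₂ + 3 * (k₂ - 1) * z₂ ≤ 3 * (OPT + k' * z₂) + 4 * Rstar) :
    a * C₁ + b * C₂ ≤ (3 + ε) * OPT + 4 * Rstar + 3 * z₁ := by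
  subst habk
  have hn : 1 ≤ n := by exact_mod_cast hk₁1.trans hk₁n
  have hcomb : a * C₁ + b * C₂
      ≤ 3 * OPT + 4 * Rstar + 3 * z₁ + 3 * (a * b * (k₁ - k₂) + b) * (z₂ - z₁) :=
    convex_combination_le_add_gap ha hb hab (by linarith) (by linarith)
  have hcoeff : a * b * (k₁ - k₂) + b ≤ n * 2 ^ n := calc
    _ ≤ k₁ / 4 + 1 := gap_coeff_le ha hb hab (by linarith) hk₂
    _ ≤ n / 4 + 1 := by gcongr
    _ ≤ n * 2 ^ n := div_four_add_one_le_mul_two_pow hn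
  have hgap : 3 * (a * b * (k₁ - k₂) + b) * (z₂ - z₁) ≤ ε * OPT :=
    three_mul_mul_le_of_le_div hcoeff (by positivity) hz (by rwa [← mul_assoc])
  linarith
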